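/- Assume b ≠ 0, a ≠ −2, b² ≠ a + 2 and b² ≠ 4. Then the polynomials (2+a)x⁴ + 2b x² + 1 and −64b²x²(b − (a−6)x²) + 16(3 + b x²)(−4a²x⁴ + (b + (6+a)x²)²) have a common complex root if and only if 36 − 12a + a² − 10b² + 3a b² = 0. Equivalently, the curve C_{a,b} has a flex point of the form [x : x : 1] iff Q(a,b) := 36 − 12a + a² − 10b² + 3ab² = 0. -/

import Mathlib

/-!
Modulo the quartic `P = (2+a)x⁴ + 2bx² + 1`, the Hessian satisfies
`(a+2)² H ≡ -144 (a+2)(b² - a - 2)(b(3a-10)x² + a - 6)`, so at a root of `P` the Hessian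
vanishes exactly when `b(3a-10)x² = 6 - a`. Substituting this value of `x²` into `P` gives
`(b(3a-10))² P = (a+2) Q(a,b)`, and conversely when `Q = 0` (which forces `3a ≠ 10`) a square
root of `(6-a)/(b(3a-10))` is a common root.
-/

section CommRing

variable {R : Type*} [CommRing R]

/-- `F(x,x,1)`, resp. `H_F(x,x,1)` below, for `F = x⁴ + y⁴ + z⁴ + a x²y² + b(x²+y²)z²`. -/
def diagQuartic (a b x : R) : R := (2 + a) * x ^ 4 + 2 * b * x ^ 2 + 1

def diagHessian (a b x : R) : R :=
  -64 * b ^ 2 * x ^ 2 * (b - (a - 6) * x ^ 2) +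
    16 * (3 + b * x ^ 2) * (-4 * a ^ 2 * x ^ 4 + (b + (6 + a) * x ^ 2) ^ 2)

def flexDiscriminant (a b : R) : R := 36 - 12 * a + a ^ 2 - 10 * b ^ 2 + 3 * a * b ^ 2

theorem sq_add_two_mul_diagHessian (a b x : R) :
    (a + 2) ^ 2 * diagHessian a b x =
      ((3456 + 2880 * a + 288 * a ^ 2 - 144 * a ^ 3 + (-1536 - 384 * a + 192 * a ^ 2) * b ^ 2) +
          (1152 + 960 * a + 96 * a ^ 2 - 48 * a ^ 3) * b * x ^ 2) * diagQuartic a b x -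
        144 * (a + 2) * (b ^ 2 - a - 2) * (b * (3 * a - 10) * x ^ 2 - (6 - a)) := by
  unfold diagHessian diagQuartic
  ring

theorem sq_mul_diagQuartic (a b x : R) :
    (b * (3 * a - 10)) ^ 2 * diagQuartic a b x =
      (a + 2) * flexDiscriminant a b +
        ((2 + a) * (b * (3 * a - 10) * x ^ 2 + (6 - a)) + 2 * b ^ 2 * (3 * a - 10)) *
          (b * (3 * a - 10) * x ^ 2 - (6 - a)) := by
  unfold diagQuartic flexDiscriminant
  ring

end CommRing

section Field

variable {K : Type*} [Field K] {a b x : K}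

theorem diagHessian_eq_zero_iff [CharZero K] (ha : a + 2 ≠ 0) (hab : b ^ 2 - a - 2 ≠ 0)
    (hP : diagQuartic a b x = 0) :
    diagHessian a b x = 0 ↔ b * (3 * a - 10) * x ^ 2 = 6 - a := by
  have key := sq_add_two_mul_diagHessian a b x
  rw [hP, mul_zero, zero_sub] at key
  have hc : (144 : K) * (a + 2) * (b ^ 2 - a - 2) ≠ 0 :=
    mul_ne_zero (mul_ne_zero (by norm_num) ha) hab
  rw [← sub_eq_zero (a := b * _ * _), ← mul_eq_zero_iff_left (pow_ne_zero 2 ha), key, neg_eq_zero,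
    mul_eq_zero_iff_left hc]

theorem flexDiscriminant_eq_zero_of_diagQuartic_eq_zero (ha : a + 2 ≠ 0)
    (hL : b * (3 * a - 10) * x ^ 2 = 6 - a) (hP : diagQuartic a b x = 0) :
    flexDiscriminant a b = 0 := by
  have key := sq_mul_diagQuartic a b x
  rw [hP, sub_eq_zero.mpr hL, mul_zero, mul_zero, add_zero, eq_comm] at key
  exact (mul_eq_zero.mp key).resolve_left ha

theorem diagQuartic_eq_zero_of_flexDiscriminant_eq_zero (hd : b * (3 * a - 10) ≠ 0)
    (hL : b * (3 * a - 10) * x ^ 2 = 6 - a) (hQ : flexDiscriminant a b = 0) :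
    diagQuartic a b x = 0 := by
  have key := sq_mul_diagQuartic a b x
  rw [hQ, sub_eq_zero.mpr hL, mul_zero, mul_zero, add_zero] at key
  exact (mul_eq_zero.mp key).resolve_left (pow_ne_zero 2 hd)

theorem three_mul_sub_ten_ne_zero_of_flexDiscriminant_eq_zero [CharZero K]
    (hQ : flexDiscriminant a b = 0) :
    3 * a - 10 ≠ 0 := by
  intro h
  have : (64 : K) = 0 := by
    unfold flexDiscriminant at hQ
    linear_combination 9 * hQ - (9 * b ^ 2 + 3 * a - 26) * h
  norm_num at this

end Field

theorem diagonal_flex_iff (a b : ℂ) (hb : b ≠ 0) (ha : a + 2 ≠ 0)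
    (hab : b ^ 2 - a - 2 ≠ 0) :
    (∃ x : ℂ, (2 + a) * x ^ 4 + 2 * b * x ^ 2 + 1 = 0 ∧
      -64 * b ^ 2 * x ^ 2 * (b - (a - 6) * x ^ 2) +
        16 * (3 + b * x ^ 2) *
          (-4 * a ^ 2 * x ^ 4 + (b + (6 + a) * x ^ 2) ^ 2) = 0) ↔
    36 - 12 * a + a ^ 2 - 10 * b ^ 2 + 3 * a * b ^ 2 = 0 := by
  change (∃ x, diagQuartic a b x = 0 ∧ diagHessian a b x = 0) ↔ flexDiscriminant a b = 0
  constructor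
  · rintro ⟨x, hP, hH⟩
    exact flexDiscriminant_eq_zero_of_diagQuartic_eq_zero ha
      ((diagHessian_eq_zero_iff ha hab hP).mp hH) hP
  · intro hQ
    have hd : b * (3 * a - 10) ≠ 0 :=
      mul_ne_zero hb (three_mul_sub_ten_ne_zero_of_flexDiscriminant_eq_zero hQ)
    obtain ⟨x, hx⟩ := IsAlgClosed.exists_pow_nat_eq ((6 - a) / (b * (3 * a - 10))) two_pos
    have hL : b * (3 * a - 10) * x ^ 2 = 6 - a := by rw [hx, mul_div_cancel₀ _ hd]
    have hP := diagQuartic_eq_zero_of_flexDiscriminant_eq_zero hd hL hQ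
    exact ⟨x, hP, (diagHessian_eq_zero_iff ha hab hP).mpr hL⟩
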